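/- Let i ≠ j be coordinates in {1,...,n}, and let g, h : {-1,1}^n → ℝ be functions such that g(x) does not depend on x_i and h(x) does not depend on x_j. Then E_x[ x_i x_j g(x) h(x) ] = E_x[ D_j g(x) · D_i h(x) ], where x is uniform on {-1,1}^n. Moreover, if g and h take values in {-1,1}, then E_x[ x_i x_j g(x) h(x) ] ≤ ( Inf_j[g] + Inf_i[h] ) / 2. -/
import Mathlib


open Finset
open scoped Classical

noncomputable section

/-- The Boolean cube `{-1,1}^V` as a finset of functions `V → ℤ`. -/
def cube (V : Type*) [Fintype V] [DecidableEq V] : Finset (V → ℤ) :=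
  Fintype.piFinset fun _ => ({-1, 1} : Finset ℤ)

/-- Negate the `i`-th coordinate. -/
def flipAt {V : Type*} [DecidableEq V] (x : V → ℤ) (i : V) : V → ℤ :=
  Function.update x i (-(x i))

/-- Influence of coordinate `i` on `f`: the probability over a uniform point of the cube
that flipping coordinate `i` changes the value of `f`. -/
def coordInf {V : Type*} [Fintype V] [DecidableEq V] {α : Type*} (f : (V → ℤ) → α) (i : V) : ℝ :=
  (∑ x ∈ cube V, if f x ≠ f (flipAt x i) then (1 : ℝ) else 0) / (cube V).card

/-- Total influence of `f`. -/
def totalInf {V : Type*} [Fintype V] [DecidableEq V] {α : Type*} (f : (V → ℤ) → α) : ℝ :=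
  ∑ i : V, coordInf f i

/-- Sign function, with `sgn 0 = 0`. -/
def sgn (t : ℝ) : ℤ := if 0 < t then 1 else if t < 0 then -1 else 0

/-- A quadratic multilinear polynomial `∑_{i<j} a_{ij} x_i x_j + ∑_i b_i x_i + c`. -/
def quadPoly {V : Type*} [Fintype V] [LinearOrder V] (a : V → V → ℝ) (b : V → ℝ) (c : ℝ)
    (x : V → ℤ) : ℝ :=
  (∑ i : V, ∑ j : V, if i < j then a i j * x i * x j else 0) + (∑ i : V, b i * x i) + c

/-- `f` is a QTF supported on the graph `G`: it has a quadratic representation whose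
cross terms only involve edges of `G`, and whose polynomial is nonvanishing on the cube. -/
def IsQTFSupportedOn {V : Type*} [Fintype V] [LinearOrder V] (G : SimpleGraph V)
    (f : (V → ℤ) → ℤ) : Prop :=
  ∃ a b c, (∀ i j : V, i < j → a i j ≠ 0 → G.Adj i j) ∧
    (∀ x ∈ cube V, quadPoly a b c x ≠ 0) ∧
    (∀ x ∈ cube V, f x = sgn (quadPoly a b c x))

/-- The multilinear polynomial with coefficients `c`, evaluated on the cube:
`p(x) = Σ_S c_S · Π_{i ∈ S} x_i`. -/
def multilinear {n : ℕ} (c : Finset (Fin n) → ℝ) (x : Fin n → ℤ) : ℝ :=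
  ∑ S : Finset (Fin n), c S * ∏ i ∈ S, (x i : ℝ)

/-- The discrete derivative `D_i g(x) = (g(x^{i→1}) - g(x^{i→-1}))/2`. -/
def dDeriv {n : ℕ} (g : (Fin n → ℤ) → ℝ) (i : Fin n) (x : Fin n → ℤ) : ℝ :=
  (g (Function.update x i 1) - g (Function.update x i (-1))) / 2

lemma mem_cube {V : Type*} [Fintype V] [DecidableEq V] {x : V → ℤ} :
    x ∈ cube V ↔ ∀ k, x k = -1 ∨ x k = 1 := by
  simp [cube, Fintype.mem_piFinset]

lemma update_mem_cube {V : Type*} [Fintype V] [DecidableEq V] {x : V → ℤ}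
    (hx : x ∈ cube V) (k : V) {a : ℤ} (ha : a = -1 ∨ a = 1) :
    Function.update x k a ∈ cube V := by
  rw [mem_cube] at hx ⊢
  intro m
  rcases eq_or_ne m k with rfl | hm
  · simpa using ha
  · simpa [Function.update_of_ne hm] using hx m

lemma flipAt_mem_cube {V : Type*} [Fintype V] [DecidableEq V] {x : V → ℤ}
    (hx : x ∈ cube V) (k : V) : flipAt x k ∈ cube V := by
  apply update_mem_cube hx
  rcases (mem_cube.1 hx) k with h | h <;> simp [h]

lemma sum_coord_mul_eq_zero {V : Type*} [Fintype V] [DecidableEq V]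
    (k : V) (F : (V → ℤ) → ℝ) (hF : ∀ x ∈ cube V, F (flipAt x k) = F x) :
    ∑ x ∈ cube V, (x k : ℝ) * F x = 0 := by
  apply Finset.sum_involution (fun x _ => flipAt x k)
  · intro x hx
    have h1 : (flipAt x k) k = -(x k) := by simp [flipAt]
    rw [hF x hx, h1]
    push_cast
    ring
  · intro x hx hne
    intro hcontra
    have := congrFun hcontra k
    simp [flipAt] at this
    rcases (mem_cube.1 hx) k with h | h <;> omega
  · intro x hx; exact flipAt_mem_cube hx k
  · intro x hx
    funext m
    rcases eq_or_ne m k with rfl | hm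
    · simp [flipAt]
    · simp [flipAt, Function.update_of_ne hm]

/-- average over coordinate k -/
def eAvg {n : ℕ} (g : (Fin n → ℤ) → ℝ) (k : Fin n) (x : Fin n → ℤ) : ℝ :=
  (g (Function.update x k 1) + g (Function.update x k (-1))) / 2

lemma decomp {n : ℕ} (g : (Fin n → ℤ) → ℝ) (k : Fin n) (x : Fin n → ℤ)
    (hx : x ∈ cube (Fin n)) :
    g x = eAvg g k x + (x k : ℝ) * dDeriv g k x := by
  rcases (mem_cube.1 hx) k with hk | hk
  · have hx' : Function.update x k (-1) = x := by
      rw [← hk]; exact Function.update_eq_self k x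
    conv_lhs => rw [← hx']
    rw [eAvg, dDeriv, hk]
    push_cast
    ring
  · have hx' : Function.update x k 1 = x := by
      rw [← hk]; exact Function.update_eq_self k x
    conv_lhs => rw [← hx']
    rw [eAvg, dDeriv, hk]
    push_cast
    ring

theorem main_eq {n : ℕ} (i j : Fin n) (hij : i ≠ j)
    (g h : (Fin n → ℤ) → ℝ)
    (hg : ∀ (x : Fin n → ℤ) (a : ℤ), g (Function.update x i a) = g x)
    (hh : ∀ (x : Fin n → ℤ) (a : ℤ), h (Function.update x j a) = h x) :
    (∑ x ∈ cube (Fin n), (x i : ℝ) * (x j : ℝ) * g x * h x) =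
      (∑ x ∈ cube (Fin n), dDeriv g j x * dDeriv h i x) := by
  have hji : j ≠ i := hij.symm
  have key : ∀ x ∈ cube (Fin n),
      (x i : ℝ) * (x j : ℝ) * g x * h x =
        (x i : ℝ) * ((x j : ℝ) * (eAvg g j x * eAvg h i x))
        + (x i : ℝ) * (dDeriv g j x * eAvg h i x)
        + (x j : ℝ) * (eAvg g j x * dDeriv h i x)
        + dDeriv g j x * dDeriv h i x := by
    intro x hx
    have hii : (x i : ℝ) * (x i : ℝ) = 1 := by
      rcases (mem_cube.1 hx) i with h' | h' <;> simp [h']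
    have hjj : (x j : ℝ) * (x j : ℝ) = 1 := by
      rcases (mem_cube.1 hx) j with h' | h' <;> simp [h']
    calc (x i : ℝ) * (x j : ℝ) * g x * h x
        = (x i : ℝ) * (x j : ℝ) * (eAvg g j x + (x j : ℝ) * dDeriv g j x)
            * (eAvg h i x + (x i : ℝ) * dDeriv h i x) := by
          rw [← decomp g j x hx, ← decomp h i x hx]
      _ = _ := by
          linear_combination ((x i : ℝ) * dDeriv g j x * eAvg h i x) * hjj
            + ((x j : ℝ) * eAvg g j x * dDeriv h i x) * hii
            + (dDeriv g j x * dDeriv h i x) * ((x i : ℝ) * (x i : ℝ) * hjj + hii)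
  rw [Finset.sum_congr rfl key]
  rw [Finset.sum_add_distrib, Finset.sum_add_distrib, Finset.sum_add_distrib]
  have hgud : ∀ (x : Fin n → ℤ) (a b : ℤ),
      g (Function.update (Function.update x i a) j b) = g (Function.update x j b) := by
    intro x a b
    rw [Function.update_comm hij, hg]
  have hhud : ∀ (x : Fin n → ℤ) (a b : ℤ),
      h (Function.update (Function.update x j a) i b) = h (Function.update x i b) := by
    intro x a b
    rw [Function.update_comm hji, hh]
  have z1 : ∑ x ∈ cube (Fin n), (x i : ℝ) * ((x j : ℝ) * (eAvg g j x * eAvg h i x)) = 0 := by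
    apply sum_coord_mul_eq_zero
    intro x hx
    simp only [flipAt, eAvg, Function.update_idem, hgud, Function.update_of_ne hji]
  have z2 : ∑ x ∈ cube (Fin n), (x i : ℝ) * (dDeriv g j x * eAvg h i x) = 0 := by
    apply sum_coord_mul_eq_zero
    intro x hx
    simp only [flipAt, eAvg, dDeriv, Function.update_idem, hgud]
  have z3 : ∑ x ∈ cube (Fin n), (x j : ℝ) * (eAvg g j x * dDeriv h i x) = 0 := by
    apply sum_coord_mul_eq_zero
    intro x hx
    simp only [flipAt, eAvg, dDeriv, Function.update_idem, hhud]
  rw [z1, z2, z3]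
  ring

lemma pair_vals (u v : ℝ) (hu : u = 1 ∨ u = -1) (hv : v = 1 ∨ v = -1) :
    |(u - v) / 2| ≤ 1 ∧ (if u ≠ v then (1 : ℝ) else 0) = |(u - v) / 2| := by
  rcases hu with rfl | rfl <;> rcases hv with rfl | rfl <;> norm_num

lemma coordInf_eq_sum_abs {n : ℕ} (g : (Fin n → ℤ) → ℝ) (k : Fin n)
    (hgb : ∀ x ∈ cube (Fin n), g x = 1 ∨ g x = -1) :
    coordInf g k = (∑ x ∈ cube (Fin n), |dDeriv g k x|) / (cube (Fin n)).card := by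
  unfold coordInf
  congr 1
  apply Finset.sum_congr rfl
  intro x hx
  have h1 : g (Function.update x k 1) = 1 ∨ g (Function.update x k 1) = -1 :=
    hgb _ (update_mem_cube hx k (Or.inr rfl))
  have hm : g (Function.update x k (-1)) = 1 ∨ g (Function.update x k (-1)) = -1 :=
    hgb _ (update_mem_cube hx k (Or.inl rfl))
  rcases (mem_cube.1 hx) k with hk | hk
  · have hx' : Function.update x k (-1) = x := by
      rw [← hk]; exact Function.update_eq_self k x
    have hflip : flipAt x k = Function.update x k 1 := by
      rw [flipAt, hk]; norm_num
    rw [hflip]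
    conv_lhs => rw [← hx']
    simp only [Function.update_idem]
    rw [dDeriv, ← neg_sub (g (Function.update x k (-1))), neg_div, abs_neg]
    exact (pair_vals _ _ hm h1).2
  · have hx' : Function.update x k 1 = x := by
      rw [← hk]; exact Function.update_eq_self k x
    have hflip : flipAt x k = Function.update x k (-1) := by
      rw [flipAt, hk]
    rw [hflip]
    conv_lhs => rw [← hx']
    simp only [Function.update_idem]
    rw [dDeriv]
    exact (pair_vals _ _ h1 hm).2

/-- If `g` does not depend on coordinate `i` and `h` does not depend on coordinate `j ≠ i`,
then `E_x[x_i x_j g(x) h(x)] = E_x[D_j g(x) · D_i h(x)]`; moreover when `g` and `h` take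
values in `{-1,1}` on the cube, this quantity is at most `(Inf_j[g] + Inf_i[h])/2`. -/
theorem cross_correlation_bound {n : ℕ} (i j : Fin n) (hij : i ≠ j)
    (g h : (Fin n → ℤ) → ℝ)
    (hg : ∀ (x : Fin n → ℤ) (a : ℤ), g (Function.update x i a) = g x)
    (hh : ∀ (x : Fin n → ℤ) (a : ℤ), h (Function.update x j a) = h x) :
    (∑ x ∈ cube (Fin n), (x i : ℝ) * (x j : ℝ) * g x * h x) / (cube (Fin n)).card =
      (∑ x ∈ cube (Fin n), dDeriv g j x * dDeriv h i x) / (cube (Fin n)).card ∧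
    ((∀ x ∈ cube (Fin n), g x = 1 ∨ g x = -1) → (∀ x ∈ cube (Fin n), h x = 1 ∨ h x = -1) →
      (∑ x ∈ cube (Fin n), (x i : ℝ) * (x j : ℝ) * g x * h x) / (cube (Fin n)).card ≤
        (coordInf g j + coordInf h i) / 2) := by
  have hmain := main_eq i j hij g h hg hh
  refine ⟨by rw [hmain], ?_⟩
  intro hgb hhb
  have hcard : (0 : ℝ) < (cube (Fin n)).card := by
    have : (fun _ => (1 : ℤ)) ∈ cube (Fin n) := mem_cube.2 fun k => Or.inr rfl
    exact_mod_cast Finset.card_pos.2 ⟨_, this⟩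
  rw [hmain, coordInf_eq_sum_abs g j hgb, coordInf_eq_sum_abs h i hhb]
  have hS : (∑ x ∈ cube (Fin n), dDeriv g j x * dDeriv h i x) ≤
      ((∑ x ∈ cube (Fin n), |dDeriv g j x|) + (∑ x ∈ cube (Fin n), |dDeriv h i x|)) / 2 := by
    rw [← Finset.sum_add_distrib]
    rw [Finset.sum_div]
    apply Finset.sum_le_sum
    intro x hx
    have hDg : |dDeriv g j x| ≤ 1 := by
      rw [dDeriv]
      exact (pair_vals _ _ (hgb _ (update_mem_cube hx j (Or.inr rfl)))
        (hgb _ (update_mem_cube hx j (Or.inl rfl)))).1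
    have hDh : |dDeriv h i x| ≤ 1 := by
      rw [dDeriv]
      exact (pair_vals _ _ (hhb _ (update_mem_cube hx i (Or.inr rfl)))
        (hhb _ (update_mem_cube hx i (Or.inl rfl)))).1
    have h1 : dDeriv g j x * dDeriv h i x ≤ |dDeriv g j x| * |dDeriv h i x| := by
      rw [← abs_mul]
      exact le_abs_self _
    nlinarith [abs_nonneg (dDeriv g j x), abs_nonneg (dDeriv h i x)]
  calc (∑ x ∈ cube (Fin n), dDeriv g j x * dDeriv h i x) / (cube (Fin n)).card
      ≤ (((∑ x ∈ cube (Fin n), |dDeriv g j x|) + (∑ x ∈ cube (Fin n), |dDeriv h i x|)) / 2) /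
        (cube (Fin n)).card := by
        exact (div_le_div_iff_of_pos_right hcard).2 hS
    _ = ((∑ x ∈ cube (Fin n), |dDeriv g j x|) / (cube (Fin n)).card +
        (∑ x ∈ cube (Fin n), |dDeriv h i x|) / (cube (Fin n)).card) / 2 := by
        ring
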